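/- arXiv:2210.06848 — 4 statements merged into one kernel-verified Lean document; each statement's English description precedes it below -/
import Mathlib

section
/- Let X be a compact uniform space and f_{0,∞} a sequence of continuous self-maps of X. Then for every n ≥ 1, the topological entropy of the n-th iterate system satisfies h(f_{0,∞}^n) ≤ n · h(f_{0,∞}), where f_{0,∞}^n = {f_{kn}^n}_{k≥0} with f_{kn}^n = f_{kn+n−1} ∘ ⋯ ∘ f_{kn}. -/
open Filter Set
open scoped Uniformity

/-- `itr f i n = f (i+n-1) ∘ ⋯ ∘ f i`, the composition of `n` maps of the sequence `f`
starting at index `i` (so `itr f i 0 = id`). -/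
def itr {X : Type*} (f : ℕ → X → X) (i : ℕ) : ℕ → X → X
  | 0 => id
  | n + 1 => fun x => f (i + n) (itr f i n x)

/-- `E` is an `(n,γ)`-separated set for the nonautonomous system `f`. -/
def IsSep {X : Type*} (f : ℕ → X → X) (n : ℕ) (γ : Set (X × X)) (E : Set X) : Prop :=
  ∀ x ∈ E, ∀ y ∈ E, x ≠ y → ∃ j < n, (itr f 0 j x, itr f 0 j y) ∉ γ

/-- `F` `(n,γ)`-spans the set `K` for the nonautonomous system `f`. -/
def Spans {X : Type*} (f : ℕ → X → X) (n : ℕ) (γ : Set (X × X)) (F K : Set X) : Prop :=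
  ∀ x ∈ K, ∃ y ∈ F, ∀ j < n, (itr f 0 j x, itr f 0 j y) ∈ γ

/-- Maximal cardinality of an `(n,γ)`-separated subset of `Λ`. -/
noncomputable def sepCard {X : Type*} (f : ℕ → X → X) (Λ : Set X) (n : ℕ)
    (γ : Set (X × X)) : ℕ :=
  sSup {m | ∃ E : Finset X, ↑E ⊆ Λ ∧ IsSep f n γ ↑E ∧ E.card = m}

/-- Minimal cardinality of a subset of `Λ` that `(n,γ)`-spans `Λ`. -/
noncomputable def spanCard {X : Type*} (f : ℕ → X → X) (Λ : Set X) (n : ℕ)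
    (γ : Set (X × X)) : ℕ :=
  sInf {m | ∃ F : Finset X, ↑F ⊆ Λ ∧ Spans f n γ ↑F Λ ∧ F.card = m}


/-- Topological entropy of the nonautonomous system `f` on the set `Λ`, defined via
separated sets; by antitonicity in the entourage, the supremum over all entourages agrees
with the limit along the net of symmetric open entourages used in the paper. -/
noncomputable def entropy {X : Type*} [UniformSpace X] (f : ℕ → X → X) (Λ : Set X) : EReal :=
  ⨆ γ ∈ 𝓤 X, atTop.limsup fun n : ℕ =>
    ((Real.log (sepCard f Λ n γ) / n : ℝ) : EReal)

/-!
An `(m, γ)`-separated set for the block system `k ↦ f_{kn}^n` is `(mn, γ)`-separated for `f`,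
because the block orbit visits only the times `0, n, 2n, …` of the original orbit. Hence
`log s_m(f^n) / m ≤ n · log s_{mn}(f) / (mn)`, and the limsup along the subsequence `mn` is at
most the full limsup. Compactness is what makes the separated cardinalities bounded, so that
`sepCard` is a genuine maximum rather than the junk value of an unbounded `sSup`.
-/

lemma itr_add {X : Type*} (f : ℕ → X → X) (i a b : ℕ) (x : X) :
    itr f i (a + b) x = itr f (i + a) b (itr f i a x) := by
  induction b with
  | zero => rfl
  | succ b ih =>
    change f (i + (a + b)) (itr f i (a + b) x) = f (i + a + b) (itr f (i + a) b (itr f i a x))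
    rw [ih, Nat.add_assoc]

lemma itr_blocks {X : Type*} (f : ℕ → X → X) (n i j : ℕ) (x : X) :
    itr (fun k => itr f (k * n) n) i j x = itr f (i * n) (j * n) x := by
  induction j with
  | zero => simp [itr]
  | succ j ih =>
    change itr f ((i + j) * n) n (itr (fun k => itr f (k * n) n) i j x) = _
    rw [ih, Nat.succ_mul, itr_add, Nat.add_mul]

lemma IsSep.of_blocks {X : Type*} {f : ℕ → X → X} {n m : ℕ} (hn : 0 < n) {γ : Set (X × X)}
    {E : Set X} (h : IsSep (fun k => itr f (k * n) n) m γ E) : IsSep f (m * n) γ E := by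
  intro x hx y hy hxy
  obtain ⟨j, hj, hjγ⟩ := h x hx y hy hxy
  refine ⟨j * n, Nat.mul_lt_mul_of_pos_right hj hn, ?_⟩
  rwa [itr_blocks, itr_blocks, Nat.zero_mul] at hjγ

lemma exists_finset_map_fibers_subset {X : Type*} [UniformSpace X] [CompactSpace X]
    {γ : Set (X × X)} (hγ : γ ∈ 𝓤 X) :
    ∃ (T : Finset X) (z : X → X), (∀ x, z x ∈ T) ∧ ∀ x y, z x = z y → (x, y) ∈ γ := by
  obtain ⟨t, ht, t_symm, htγ⟩ := comp_symm_mem_uniformity_sets hγ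
  obtain ⟨T, hT, hcover⟩ := isCompact_univ.totallyBounded t ht
  have : ∀ x, ∃ c ∈ T, (x, c) ∈ t := fun x => by simpa using hcover (mem_univ x)
  choose z hzT hxz using this
  refine ⟨hT.toFinset, z, fun x => hT.mem_toFinset.2 (hzT x), fun x y hxy => htγ ?_⟩
  exact ⟨z x, hxz x, hxy ▸ t_symm.symm _ _ (hxz y)⟩

lemma IsSep.card_le_pow {X : Type*} {f : ℕ → X → X} {N : ℕ} {γ : Set (X × X)} {T : Finset X}
    {z : X → X} (hzT : ∀ x, z x ∈ T) (hz : ∀ x y, z x = z y → (x, y) ∈ γ) {E : Finset X}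
    (hE : IsSep f N γ E) : E.card ≤ T.card ^ N := by
  classical
  have hinj : Set.InjOn (fun x (j : Fin N) => z (itr f 0 j x)) E := by
    intro x hx y hy hxy
    by_contra hne
    obtain ⟨j, hj, hjγ⟩ := hE x hx y hy hne
    exact hjγ (hz _ _ (congrFun hxy ⟨j, hj⟩))
  simpa using Finset.card_le_card_of_injOn _
    (fun x _ => Fintype.mem_piFinset.2 fun j => hzT _) (t := Fintype.piFinset fun _ => T) hinj

lemma bddAbove_card_isSep {X : Type*} [UniformSpace X] [CompactSpace X] (f : ℕ → X → X)
    (Λ : Set X) (N : ℕ) {γ : Set (X × X)} (hγ : γ ∈ 𝓤 X) :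
    BddAbove {m | ∃ E : Finset X, ↑E ⊆ Λ ∧ IsSep f N γ ↑E ∧ E.card = m} := by
  obtain ⟨T, z, hzT, hz⟩ := exists_finset_map_fibers_subset hγ
  exact ⟨T.card ^ N, by rintro _ ⟨E, -, hE, rfl⟩; exact hE.card_le_pow hzT hz⟩

lemma sepCard_blocks_le {X : Type*} [UniformSpace X] [CompactSpace X] (f : ℕ → X → X)
    (Λ : Set X) {n : ℕ} (hn : 0 < n) (m : ℕ) {γ : Set (X × X)} (hγ : γ ∈ 𝓤 X) :
    sepCard (fun k => itr f (k * n) n) Λ m γ ≤ sepCard f Λ (m * n) γ := by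
  refine csSup_le_csSup (bddAbove_card_isSep f Λ (m * n) hγ)
    ⟨0, ∅, by simp, by simp [IsSep], rfl⟩ ?_
  rintro _ ⟨E, hEΛ, hE, rfl⟩
  exact ⟨E, hEΛ, hE.of_blocks hn, rfl⟩

lemma Real.log_natCast_monotone : Monotone fun k : ℕ => Real.log k := by
  intro a b hab
  rcases a.eq_zero_or_pos with rfl | ha
  · simpa using Real.log_natCast_nonneg b
  · exact Real.log_le_log (by exact_mod_cast ha) (by exact_mod_cast hab)

lemma limsup_log_sepCard_blocks_le {X : Type*} [UniformSpace X] [CompactSpace X]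
    (f : ℕ → X → X) (Λ : Set X) {n : ℕ} (hn : 0 < n) {γ : Set (X × X)} (hγ : γ ∈ 𝓤 X) :
    atTop.limsup (fun m : ℕ =>
        ((Real.log (sepCard (fun k => itr f (k * n) n) Λ m γ) / m : ℝ) : EReal)) ≤
      (n : EReal) * atTop.limsup fun N : ℕ => ((Real.log (sepCard f Λ N γ) / N : ℝ) : EReal) := by
  set u : ℕ → EReal := fun N => ((Real.log (sepCard f Λ N γ) / N : ℝ) : EReal)
  have hblock : ∀ m : ℕ, Real.log (sepCard (fun k => itr f (k * n) n) Λ m γ) / m ≤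
      n * (Real.log (sepCard f Λ (m * n) γ) / (m * n : ℕ)) := fun m => by
    rw [Nat.cast_mul, mul_div_left_comm, div_mul_cancel_right₀ (by positivity), ← div_eq_mul_inv]
    exact div_le_div_of_nonneg_right (Real.log_natCast_monotone (sepCard_blocks_le f Λ hn m hγ))
      m.cast_nonneg
  calc _ ≤ atTop.limsup fun m : ℕ => (n : EReal) * u (m * n) :=
        limsup_le_limsup (.of_forall fun m => by simp only [u]; exact_mod_cast hblock m)
    _ = (n : EReal) * atTop.limsup (u ∘ fun m : ℕ => m * n) :=
        EReal.limsup_const_mul_of_nonneg_of_ne_top (by positivity) (EReal.natCast_ne_top n)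
    _ ≤ (n : EReal) * atTop.limsup u :=
        mul_le_mul_of_nonneg_left ((tendsto_id.atTop_mul_const' hn).limsup_comp_le_limsup)
          (by positivity)

theorem entropy_iterate_le_general {X : Type*} [UniformSpace X] [CompactSpace X]
    (f : ℕ → X → X) (n : ℕ) (hn : 1 ≤ n) :
    entropy (fun k => itr f (k * n) n) Set.univ ≤ (n : EReal) * entropy f Set.univ :=
  iSup₂_le fun γ hγ => (limsup_log_sepCard_blocks_le f univ hn hγ).trans <|
    mul_le_mul_of_nonneg_left (le_iSup₂_of_le γ hγ le_rfl) (by positivity)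

/-- The entropy of the `n`-th iterate system `f_{0,∞}^n = {f_{kn}^n}_k` is at most
`n` times the entropy of `f_{0,∞}`. -/
theorem entropy_iterate_le {X : Type*} [UniformSpace X] [CompactSpace X]
    (f : ℕ → X → X) (hf : ∀ k, Continuous (f k)) (n : ℕ) (hn : 1 ≤ n) :
    entropy (fun k => itr f (k * n) n) Set.univ ≤ (n : EReal) * entropy f Set.univ :=
  entropy_iterate_le_general f n hn
end

section
/- Let (X, 𝒰) and (Y, 𝒱) be compact uniform spaces, f_{0,∞} and g_{0,∞} sequences of continuous self-maps of X and Y respectively. Then the product system satisfies h(f_{0,∞} × g_{0,∞}) ≤ h(f_{0,∞}) + h(g_{0,∞}). -/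
open Filter Set
open scoped Uniformity

/-!
Separated and spanning sets control each other: an `(n,γ)`-separated set has at most as many
points as an `(n,δ)`-spanning set when `δ` is symmetric with `δ ○ δ ⊆ γ`, and a maximal
`(n,δ)`-separated set `(n,δ)`-spans. Every entourage `W` of `X × Y` contains such a composite of a
product entourage `entourageProd γ η`, and products of `(n,γ)`- and `(n,η)`-spanning sets
`(n, entourageProd γ η)`-span `X × Y`. So `(n,W)`-separated sets have at most
`sepCard f univ n γ * sepCard g univ n η` points; then take `log (·) / n` and `limsup`.
-/

section

open SetRel

variable {X Y : Type*}

theorem continuous_itr [TopologicalSpace X] {f : ℕ → X → X} (hf : ∀ n, Continuous (f n))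
    (i n : ℕ) : Continuous (itr f i n) := by
  induction n with
  | zero => exact continuous_id
  | succ n ih => exact (hf _).comp ih

theorem itr_prodMap (f : ℕ → X → X) (g : ℕ → Y → Y) (i n : ℕ) (p : X × Y) :
    itr (fun n (p : X × Y) => (f n p.1, g n p.2)) i n p = (itr f i n p.1, itr g i n p.2) := by
  induction n with
  | zero => rfl
  | succ n ih => simp [itr, ih]

theorem entourageProd_comp_subset (γ γ' : SetRel X X) (η η' : SetRel Y Y) :
    entourageProd γ η ○ entourageProd γ' η' ⊆ entourageProd (γ ○ γ') (η ○ η') :=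
  fun _ ⟨_, h₁, h₂⟩ => ⟨⟨_, h₁.1, h₂.1⟩, ⟨_, h₁.2, h₂.2⟩⟩

theorem Spans.prod {f : ℕ → X → X} {g : ℕ → Y → Y} {n : ℕ} {γ : SetRel X X} {η : SetRel Y Y}
    {F : Finset X} {G : Finset Y} (hF : Spans f n γ F univ) (hG : Spans g n η G univ) :
    Spans (fun n (p : X × Y) => (f n p.1, g n p.2)) n (entourageProd γ η) ↑(F ×ˢ G) univ := by
  rintro ⟨x, y⟩ -
  obtain ⟨u, hu, hxu⟩ := hF x (mem_univ x)
  obtain ⟨v, hv, hyv⟩ := hG y (mem_univ y)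
  refine ⟨(u, v), Finset.mem_coe.2 (Finset.mem_product.2 ⟨hu, hv⟩), fun j hj => ?_⟩
  rw [itr_prodMap, itr_prodMap]
  exact ⟨hxu j hj, hyv j hj⟩

theorem exists_finset_spans [UniformSpace X] [CompactSpace X] {f : ℕ → X → X}
    (hf : ∀ n, Continuous (f n)) (n : ℕ) {γ : SetRel X X} (hγ : γ ∈ 𝓤 X) :
    ∃ F : Finset X, Spans f n γ F univ := by
  have hbowen : (⋂ j ∈ Finset.range n, Prod.map (itr f 0 j) (itr f 0 j) ⁻¹' γ) ∈ 𝓤 X :=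
    (Finset.iInter_mem_sets _).2 fun j _ =>
      CompactSpace.uniformContinuous_of_continuous (continuous_itr hf 0 j) hγ
  obtain ⟨t, ht, hcover⟩ := isCompact_univ.totallyBounded _ hbowen
  refine ⟨ht.toFinset, fun x _ => ?_⟩
  obtain ⟨y, hy, hxy⟩ := mem_iUnion₂.1 (hcover (mem_univ x))
  exact ⟨y, by simpa using hy, fun j hj => mem_iInter₂.1 hxy j (Finset.mem_range.2 hj)⟩

section SeparatedSpanning

variable {f : ℕ → X → X} {n : ℕ} {γ δ : SetRel X X}

theorem IsSep.card_le_of_spans [δ.IsSymm] (hδγ : δ ○ δ ⊆ γ) {E F : Finset X}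
    (hE : IsSep f n γ E) (hF : Spans f n δ F univ) : E.card ≤ F.card := by
  choose φ hφF hφ using fun x => hF x (mem_univ x)
  refine Finset.card_le_card_of_injOn φ (fun x _ => hφF x) fun x hx y hy hxy => ?_
  by_contra hne
  obtain ⟨j, hj, hsep⟩ := hE x hx y hy hne
  exact hsep (hδγ (prodMk_mem_comp (hφ x j hj) (δ.symm (hxy ▸ hφ y j hj))))

theorem sepCard_le_of_spans [δ.IsSymm] (hδγ : δ ○ δ ⊆ γ) {F : Finset X}
    (hF : Spans f n δ F univ) : sepCard f univ n γ ≤ F.card :=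
  csSup_le' <| by rintro _ ⟨E, -, hE, rfl⟩; exact hE.card_le_of_spans hδγ hF

theorem IsSep.spans_of_maximal [DecidableEq X] [δ.IsRefl] [δ.IsSymm] {E : Finset X}
    (hE : IsSep f n δ E) (hmax : ∀ x ∉ E, ¬IsSep f n δ ↑(insert x E)) : Spans f n δ E univ := by
  intro x _
  by_contra! hfar
  have hxE : x ∉ E := fun hx => by
    obtain ⟨j, -, hj⟩ := hfar x hx
    exact hj δ.rfl
  refine hmax x hxE fun a ha b hb hab => ?_
  rw [Finset.coe_insert, mem_insert_iff] at ha hb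
  rcases ha with rfl | ha <;> rcases hb with rfl | hb
  · exact absurd rfl hab
  · exact hfar b hb
  · obtain ⟨j, hj, hfar⟩ := hfar a ha
    exact ⟨j, hj, fun h => hfar (δ.symm h)⟩
  · exact hE a ha b hb hab

theorem exists_spans_card_eq_sepCard [UniformSpace X] [CompactSpace X]
    (hf : ∀ n, Continuous (f n)) (n : ℕ) (hδ : δ ∈ 𝓤 X) [δ.IsSymm] :
    ∃ E : Finset X, Spans f n δ E univ ∧ E.card = sepCard f univ n δ := by
  classical
  have := isRefl_of_mem_uniformity hδ
  obtain ⟨δ', hδ', hsymm, hδ'δ⟩ := comp_symm_mem_uniformity_sets hδ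
  obtain ⟨F, hF⟩ := exists_finset_spans hf n hδ'
  have hbdd : BddAbove {m | ∃ E : Finset X, (E : Set X) ⊆ univ ∧ IsSep f n δ E ∧ E.card = m} :=
    ⟨F.card, by rintro _ ⟨E, -, hE, rfl⟩; exact hE.card_le_of_spans hδ'δ hF⟩
  have hne : {m | ∃ E : Finset X, (E : Set X) ⊆ univ ∧ IsSep f n δ E ∧ E.card = m}.Nonempty :=
    ⟨0, ∅, subset_univ _, by simp [IsSep], rfl⟩
  obtain ⟨E, -, hE, hcard⟩ := Nat.sSup_mem hne hbdd
  refine ⟨E, hE.spans_of_maximal fun x hx hsep => ?_, hcard⟩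
  have hle := le_csSup hbdd ⟨_, subset_univ _, hsep, rfl⟩
  rw [Finset.card_insert_of_notMem hx] at hle
  exact absurd (hcard ▸ hle) (Nat.not_succ_le_self _)

end SeparatedSpanning

theorem sepCard_prod_le [UniformSpace X] [CompactSpace X] [UniformSpace Y] [CompactSpace Y]
    {f : ℕ → X → X} (hf : ∀ n, Continuous (f n)) {g : ℕ → Y → Y} (hg : ∀ n, Continuous (g n))
    {W : SetRel (X × Y) (X × Y)} (hW : W ∈ 𝓤 (X × Y)) :
    ∃ γ ∈ 𝓤 X, ∃ η ∈ 𝓤 Y, ∀ n, sepCard (fun n (p : X × Y) => (f n p.1, g n p.2)) univ n W ≤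
      sepCard f univ n γ * sepCard g univ n η := by
  obtain ⟨u, hu, v, hv, huvW⟩ := entourageProd_subset hW
  obtain ⟨γ, hγ, hγsymm, hγu⟩ := comp_symm_mem_uniformity_sets hu
  obtain ⟨η, hη, hηsymm, hηv⟩ := comp_symm_mem_uniformity_sets hv
  refine ⟨γ, hγ, η, hη, fun n => ?_⟩
  obtain ⟨E, hE, hEcard⟩ := exists_spans_card_eq_sepCard hf n hγ
  obtain ⟨F, hF, hFcard⟩ := exists_spans_card_eq_sepCard hg n hη
  have hcomp : entourageProd γ η ○ entourageProd γ η ⊆ W :=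
    (entourageProd_comp_subset γ γ η η).trans fun _ h => huvW ⟨hγu h.1, hηv h.2⟩
  rw [← hEcard, ← hFcard, ← Finset.card_product]
  exact sepCard_le_of_spans hcomp (hE.prod hF)

theorem Real.log_natCast_le_add_of_le_mul {a b c : ℕ} (h : a ≤ b * c) :
    Real.log a ≤ Real.log b + Real.log c := by
  rcases Nat.eq_zero_or_pos a with rfl | ha
  · simpa using add_nonneg (Real.log_natCast_nonneg b) (Real.log_natCast_nonneg c)
  · have hb : b ≠ 0 := by rintro rfl; omega
    have hc : c ≠ 0 := by rintro rfl; omega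
    rw [← Real.log_mul (by exact_mod_cast hb) (by exact_mod_cast hc)]
    exact Real.log_le_log (by exact_mod_cast ha) (by exact_mod_cast h)

theorem zero_le_limsup_log_div (a : ℕ → ℕ) :
    0 ≤ limsup (fun n : ℕ => ((Real.log (a n) / n : ℝ) : EReal)) atTop :=
  le_limsup_of_frequently_le (Frequently.of_forall fun n =>
    EReal.coe_nonneg.2 (div_nonneg (Real.log_natCast_nonneg _) n.cast_nonneg))

theorem limsup_log_div_le_add_of_le_mul {a b c : ℕ → ℕ} (h : ∀ n, a n ≤ b n * c n) :
    limsup (fun n : ℕ => ((Real.log (a n) / n : ℝ) : EReal)) atTop ≤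
      limsup (fun n : ℕ => ((Real.log (b n) / n : ℝ) : EReal)) atTop +
        limsup (fun n : ℕ => ((Real.log (c n) / n : ℝ) : EReal)) atTop := by
  have hb := zero_le_limsup_log_div b
  have hc := zero_le_limsup_log_div c
  refine (limsup_le_limsup (Eventually.of_forall fun n => ?_)).trans
    (EReal.limsup_add_le (.inl (EReal.bot_lt_zero.trans_le hb).ne')
      (.inr (EReal.bot_lt_zero.trans_le hc).ne'))
  rw [Pi.add_apply, ← EReal.coe_add, EReal.coe_le_coe_iff, ← add_div]
  exact div_le_div_of_nonneg_right (Real.log_natCast_le_add_of_le_mul (h n)) n.cast_nonneg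

end

/-- Subadditivity of entropy under products: the entropy of the product system
`f_{0,∞} × g_{0,∞}` on `X × Y` (with the product uniformity) is at most the sum of
the entropies of the factors. -/
theorem entropy_prod_le {X Y : Type*} [UniformSpace X] [CompactSpace X]
    [UniformSpace Y] [CompactSpace Y]
    (f : ℕ → X → X) (hf : ∀ n, Continuous (f n))
    (g : ℕ → Y → Y) (hg : ∀ n, Continuous (g n)) :
    entropy (fun n (p : X × Y) => (f n p.1, g n p.2)) Set.univ ≤
      entropy f Set.univ + entropy g Set.univ := by
  refine iSup₂_le fun W hW => ?_
  obtain ⟨γ, hγ, η, hη, hcard⟩ := sepCard_prod_le hf hg hW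
  exact (limsup_log_div_le_add_of_le_mul hcard).trans
    (add_le_add (le_iSup₂_of_le γ hγ le_rfl) (le_iSup₂_of_le η hη le_rfl))
end

section
/- Let (X,𝒰) and (Y,𝒱) be compact uniform spaces, f_{0,∞} and g_{0,∞} sequences of continuous self-maps of X and Y, {Λ_n} ⊂ X invariant under f_{0,∞} (f_n(Λ_n) ⊂ Λ_{n+1}) and {D_n} ⊂ Y invariant under g_{0,∞}. Suppose there are surjective maps h_n : Λ_n → D_n with h_{n+1} ∘ f_n = g_n ∘ h_n on Λ_n and {h_n} equi-continuous. Then h(f_{0,∞}, Λ_0) ≥ h(g_{0,∞}, D_0). Consequently, if the systems are topologically equi-conjugate ({h_n} are bijections with {h_n^{−1}} also equi-continuous), then h(f_{0,∞}, Λ_0) = h(g_{0,∞}, D_0). -/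
open Filter Set
open scoped Uniformity

/-! A finite `(n, γ)`-separated subset of `D_0` lifts through `h_0` to a subset of `Λ_0` of the
same size; since `h_j ∘ f_0^j = g_0^j ∘ h_0` on `Λ_0`, equicontinuity of the `h_j` makes the lift
`(n, η)`-separated. Hence `s_n(g, D_0, γ) ≤ s_n(f, Λ_0, η)`, which gives the inequality of
entropies. For an equi-conjugacy, equicontinuity of the `h_n⁻¹` lets separated sets be pushed
forward along the injective maps `h_n` instead, which gives the reverse inequality. -/

section Orbits

variable {X Y : Type*} {f : ℕ → X → X} {g : ℕ → Y → Y} {Λ : ℕ → Set X} {h : ℕ → X → Y}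

theorem itr_mapsTo (hΛ : ∀ n, MapsTo (f n) (Λ n) (Λ (n + 1))) :
    ∀ j, MapsTo (itr f 0 j) (Λ 0) (Λ j)
  | 0 => mapsTo_id _
  | j + 1 => fun _ hx => by simpa [itr] using hΛ j (itr_mapsTo hΛ j hx)

variable (hΛ : ∀ n, MapsTo (f n) (Λ n) (Λ (n + 1)))
  (hsemi : ∀ n, ∀ x ∈ Λ n, h (n + 1) (f n x) = g n (h n x))
include hΛ hsemi

theorem itr_semiconj {x : X} (hx : x ∈ Λ 0) :
    ∀ j, h j (itr f 0 j x) = itr g 0 j (h 0 x)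
  | 0 => rfl
  | j + 1 => by
      simp only [itr, zero_add]
      rw [hsemi j _ (itr_mapsTo hΛ j hx), itr_semiconj hx j]

theorem IsSep.of_image {n : ℕ} {γ : Set (Y × Y)} {η : Set (X × X)} {E : Set X}
    (hE : E ⊆ Λ 0) (hinj : InjOn (h 0) E) (hsep : IsSep g n γ (h 0 '' E))
    (hη : ∀ j, ∀ x ∈ Λ j, ∀ y ∈ Λ j, (x, y) ∈ η → (h j x, h j y) ∈ γ) :
    IsSep f n η E := by
  intro x hx y hy hxy
  obtain ⟨j, hj, hγ⟩ := hsep _ (mem_image_of_mem _ hx) _ (mem_image_of_mem _ hy)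
    (hinj.ne hx hy hxy)
  refine ⟨j, hj, fun hxyη => hγ ?_⟩
  have := hη j _ (itr_mapsTo hΛ j (hE hx)) _ (itr_mapsTo hΛ j (hE hy)) hxyη
  rwa [itr_semiconj hΛ hsemi (hE hx), itr_semiconj hΛ hsemi (hE hy)] at this

theorem IsSep.image {n : ℕ} {γ : Set (X × X)} {η : Set (Y × Y)} {E : Set X}
    (hE : E ⊆ Λ 0) (hsep : IsSep f n γ E)
    (hη : ∀ j, ∀ x ∈ Λ j, ∀ y ∈ Λ j, (h j x, h j y) ∈ η → (x, y) ∈ γ) :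
    IsSep g n η (h 0 '' E) := by
  rintro _ ⟨x, hx, rfl⟩ _ ⟨y, hy, rfl⟩ hxy
  obtain ⟨j, hj, hγ⟩ := hsep x hx y hy (ne_of_apply_ne _ hxy)
  refine ⟨j, hj, fun hxyη => hγ (hη j _ (itr_mapsTo hΛ j (hE hx)) _ (itr_mapsTo hΛ j (hE hy)) ?_)⟩
  rwa [itr_semiconj hΛ hsemi (hE hx), itr_semiconj hΛ hsemi (hE hy)]

end Orbits

section Entropy

variable {X Y : Type*} [UniformSpace X] [UniformSpace Y]

/-- Orbits of points of an `(n, η)`-separated set visit distinct sequences of cells of a fixed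
finite cover by `η₀`-balls, where `η₀ ○ η₀ ⊆ η`. -/
theorem exists_card_le_pow_of_isSep [CompactSpace X] (f : ℕ → X → X) {η : Set (X × X)}
    (hη : η ∈ 𝓤 X) : ∃ N : ℕ, ∀ n (E : Finset X), IsSep f n η ↑E → E.card ≤ N ^ n := by
  classical
  obtain ⟨η₀, hη₀, hsymm, hcomp⟩ := comp_symm_mem_uniformity_sets hη
  obtain ⟨t, htfin, hcover⟩ := isCompact_univ.totallyBounded η₀ hη₀
  lift t to Finset X using htfin
  have hcell : ∀ z : X, ∃ c ∈ t, (z, c) ∈ η₀ := fun z => by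
    simpa using hcover (mem_univ z)
  choose c hct hzc using hcell
  refine ⟨t.card, fun n E hsep => ?_⟩
  let code : X → Fin n → t := fun x j => ⟨c (itr f 0 j x), hct _⟩
  have hinj : InjOn code E := by
    intro x hx y hy hcode
    by_contra hxy
    obtain ⟨j, hj, hnot⟩ := hsep x hx y hy hxy
    have hc : c (itr f 0 j x) = c (itr f 0 j y) := congrArg Subtype.val (congrFun hcode ⟨j, hj⟩)
    exact hnot (hcomp (SetRel.prodMk_mem_comp (hzc _) (hc ▸ SetRel.symm η₀ (hzc _))))
  calc E.card ≤ (Finset.univ : Finset (Fin n → t)).card :=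
        Finset.card_le_card_of_injOn code (fun _ _ => Finset.mem_univ _) hinj
    _ = t.card ^ n := by simp

theorem card_le_sepCard [CompactSpace X] {f : ℕ → X → X} {Λ : Set X} {n : ℕ} {η : Set (X × X)}
    (hη : η ∈ 𝓤 X) {E : Finset X} (hE : ↑E ⊆ Λ) (hsep : IsSep f n η ↑E) :
    E.card ≤ sepCard f Λ n η := by
  obtain ⟨N, hN⟩ := exists_card_le_pow_of_isSep f hη
  refine le_csSup ⟨N ^ n, ?_⟩ ⟨E, hE, hsep, rfl⟩
  rintro _ ⟨F, -, hF, rfl⟩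
  exact hN n F hF

theorem log_natCast_div_mono {m k : ℕ} (hmk : m ≤ k) (n : ℕ) :
    Real.log m / n ≤ Real.log k / n := by
  refine div_le_div_of_nonneg_right ?_ n.cast_nonneg
  rcases m.eq_zero_or_pos with rfl | hm
  · simpa using Real.log_natCast_nonneg k
  · exact Real.log_le_log (by exact_mod_cast hm) (by exact_mod_cast hmk)

theorem entropy_le_of_forall_isSep_lift [CompactSpace X] {f : ℕ → X → X} {g : ℕ → Y → Y}
    {Λ : Set X} {D : Set Y}
    (hlift : ∀ γ ∈ 𝓤 Y, ∃ η ∈ 𝓤 X, ∀ n (E : Finset Y), ↑E ⊆ D → IsSep g n γ ↑E →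
      ∃ F : Finset X, ↑F ⊆ Λ ∧ IsSep f n η ↑F ∧ E.card ≤ F.card) :
    entropy g D ≤ entropy f Λ := by
  refine iSup₂_le fun γ hγ => ?_
  obtain ⟨η, hη, hηlift⟩ := hlift γ hγ
  have hsepCard : ∀ n, sepCard g D n γ ≤ sepCard f Λ n η := fun n => by
    refine csSup_le' ?_
    rintro _ ⟨E, hE, hsep, rfl⟩
    obtain ⟨F, hF, hFsep, hcard⟩ := hηlift n E hE hsep
    exact hcard.trans (card_le_sepCard hη hF hFsep)
  calc atTop.limsup (fun n : ℕ => ((Real.log (sepCard g D n γ) / n : ℝ) : EReal))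
      ≤ atTop.limsup (fun n : ℕ => ((Real.log (sepCard f Λ n η) / n : ℝ) : EReal)) :=
        limsup_le_limsup (.of_forall fun n =>
          EReal.coe_le_coe_iff.2 (log_natCast_div_mono (hsepCard n) n))
    _ ≤ entropy f Λ := le_iSup₂ (f := fun η (_ : η ∈ 𝓤 X) => atTop.limsup
        fun n : ℕ => ((Real.log (sepCard f Λ n η) / n : ℝ) : EReal)) η hη

theorem forall_mem_uniformity_of_isOpen_isSymm {p : Set (X × X) → Prop}
    (hmono : ∀ ⦃γ γ'⦄, γ ⊆ γ' → p γ → p γ')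
    (hp : ∀ γ ∈ 𝓤 X, SetRel.IsSymm γ → IsOpen γ → p γ) : ∀ γ ∈ 𝓤 X, p γ := by
  intro γ hγ
  obtain ⟨γ', ⟨hγ', hopen, hsymm⟩, hsub⟩ := uniformity_hasBasis_open_symmetric.mem_iff.mp hγ
  exact hmono hsub (hp γ' hγ' hsymm hopen)

variable {f : ℕ → X → X} {g : ℕ → Y → Y} {Λ : ℕ → Set X} {D : ℕ → Set Y} {h : ℕ → X → Y}

theorem entropy_le_of_equiSemiconj [CompactSpace X]
    (hΛ : ∀ n, MapsTo (f n) (Λ n) (Λ (n + 1))) (hsurj : SurjOn (h 0) (Λ 0) (D 0))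
    (hsemi : ∀ n, ∀ x ∈ Λ n, h (n + 1) (f n x) = g n (h n x))
    (hequi : ∀ γ ∈ 𝓤 Y, ∃ η ∈ 𝓤 X,
      ∀ n, ∀ x ∈ Λ n, ∀ y ∈ Λ n, (x, y) ∈ η → (h n x, h n y) ∈ γ) :
    entropy g (D 0) ≤ entropy f (Λ 0) := by
  classical
  refine entropy_le_of_forall_isSep_lift fun γ hγ => ?_
  obtain ⟨η, hη, hηγ⟩ := hequi γ hγ
  refine ⟨η, hη, fun n E hE hsep => ?_⟩
  obtain ⟨F, hFΛ, hinj, rfl⟩ :=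
    Finset.exists_subset_injOn_image_eq_of_surjOn (Λ 0) E (hsurj.mono subset_rfl hE)
  refine ⟨F, hFΛ, IsSep.of_image hΛ hsemi hFΛ hinj ?_ hηγ, Finset.card_image_le⟩
  rwa [← Finset.coe_image]

theorem entropy_le_of_equiEmbedding [CompactSpace Y]
    (hΛ : ∀ n, MapsTo (f n) (Λ n) (Λ (n + 1))) (hmaps : MapsTo (h 0) (Λ 0) (D 0))
    (hinj : InjOn (h 0) (Λ 0)) (hsemi : ∀ n, ∀ x ∈ Λ n, h (n + 1) (f n x) = g n (h n x))
    (hequi : ∀ γ ∈ 𝓤 X, ∃ η ∈ 𝓤 Y,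
      ∀ n, ∀ x ∈ Λ n, ∀ y ∈ Λ n, (h n x, h n y) ∈ η → (x, y) ∈ γ) :
    entropy f (Λ 0) ≤ entropy g (D 0) := by
  classical
  refine entropy_le_of_forall_isSep_lift fun γ hγ => ?_
  obtain ⟨η, hη, hηγ⟩ := hequi γ hγ
  refine ⟨η, hη, fun n E hE hsep => ⟨E.image (h 0), ?_, ?_, ?_⟩⟩
  · simpa using (hmaps.mono_left hE).image_subset
  · simpa using IsSep.image hΛ hsemi hE hsep hηγ
  · exact (Finset.card_image_of_injOn (hinj.mono hE)).ge

end Entropy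

theorem entropy_equi_semiconjugacy_general {X Y : Type*} [UniformSpace X] [CompactSpace X]
    [UniformSpace Y] [CompactSpace Y]
    (f : ℕ → X → X)
    (g : ℕ → Y → Y)
    (Λ : ℕ → Set X) (hΛinv : ∀ n, f n '' Λ n ⊆ Λ (n + 1))
    (D : ℕ → Set Y)
    (h : ℕ → X → Y)
    (hmaps : ∀ n, Set.MapsTo (h n) (Λ n) (D n))
    (hsurj : ∀ n, Set.SurjOn (h n) (Λ n) (D n))
    (hsemi : ∀ n, ∀ x ∈ Λ n, h (n + 1) (f n x) = g n (h n x))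
    (hequi : ∀ γ ∈ 𝓤 Y, SetRel.IsSymm γ → IsOpen γ → ∃ η ∈ 𝓤 X, SetRel.IsSymm η ∧
      IsOpen η ∧ ∀ n, ∀ x ∈ Λ n, ∀ y ∈ Λ n, (x, y) ∈ η → (h n x, h n y) ∈ γ) :
    entropy g (D 0) ≤ entropy f (Λ 0) ∧
      ((∀ n, Set.InjOn (h n) (Λ n)) →
        (∀ γ ∈ 𝓤 X, SetRel.IsSymm γ → IsOpen γ → ∃ η ∈ 𝓤 Y, SetRel.IsSymm η ∧
          IsOpen η ∧ ∀ n, ∀ x ∈ Λ n, ∀ y ∈ Λ n, (h n x, h n y) ∈ η → (x, y) ∈ γ) →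
        entropy g (D 0) = entropy f (Λ 0)) := by
  have hΛ : ∀ n, MapsTo (f n) (Λ n) (Λ (n + 1)) := fun n => mapsTo_iff_image_subset.2 (hΛinv n)
  have hle : entropy g (D 0) ≤ entropy f (Λ 0) := by
    refine entropy_le_of_equiSemiconj hΛ (hsurj 0) hsemi ?_
    refine forall_mem_uniformity_of_isOpen_isSymm ?_ fun γ hγ hsymm hopen => ?_
    · exact fun γ γ' hγγ' ⟨η, hη, hηγ⟩ => ⟨η, hη, fun n x hx y hy hxy => hγγ' (hηγ n x hx y hy hxy)⟩
    · obtain ⟨η, hη, -, -, hηγ⟩ := hequi γ hγ hsymm hopen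
      exact ⟨η, hη, hηγ⟩
  refine ⟨hle, fun hinj hinvequi => hle.antisymm ?_⟩
  refine entropy_le_of_equiEmbedding hΛ (hmaps 0) (hinj 0) hsemi ?_
  refine forall_mem_uniformity_of_isOpen_isSymm ?_ fun γ hγ hsymm hopen => ?_
  · exact fun γ γ' hγγ' ⟨η, hη, hηγ⟩ => ⟨η, hη, fun n x hx y hy hxy => hγγ' (hηγ n x hx y hy hxy)⟩
  · obtain ⟨η, hη, -, -, hηγ⟩ := hinvequi γ hγ hsymm hopen
    exact ⟨η, hη, hηγ⟩

/-- Entropy and topological equi-semiconjugacy: if the invariant subsystem of `f_{0,∞}` on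
`{Λ_n}` is topologically `{h_n}`-equi-semiconjugate to the invariant subsystem of
`g_{0,∞}` on `{D_n}`, then `h(f_{0,∞}, Λ_0) ≥ h(g_{0,∞}, D_0)`; consequently if
moreover the `h_n` are injective on `Λ_n` with `{h_n⁻¹}` equi-continuous (topological
equi-conjugacy), the entropies are equal. -/
theorem entropy_equi_semiconjugacy {X Y : Type*} [UniformSpace X] [CompactSpace X]
    [UniformSpace Y] [CompactSpace Y]
    (f : ℕ → X → X) (hf : ∀ n, Continuous (f n))
    (g : ℕ → Y → Y) (hg : ∀ n, Continuous (g n))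
    (Λ : ℕ → Set X) (hΛinv : ∀ n, f n '' Λ n ⊆ Λ (n + 1))
    (D : ℕ → Set Y) (hDinv : ∀ n, g n '' D n ⊆ D (n + 1))
    (h : ℕ → X → Y)
    (hmaps : ∀ n, Set.MapsTo (h n) (Λ n) (D n))
    (hsurj : ∀ n, Set.SurjOn (h n) (Λ n) (D n))
    (hsemi : ∀ n, ∀ x ∈ Λ n, h (n + 1) (f n x) = g n (h n x))
    (hequi : ∀ γ ∈ 𝓤 Y, SetRel.IsSymm γ → IsOpen γ → ∃ η ∈ 𝓤 X, SetRel.IsSymm η ∧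
      IsOpen η ∧ ∀ n, ∀ x ∈ Λ n, ∀ y ∈ Λ n, (x, y) ∈ η → (h n x, h n y) ∈ γ) :
    entropy g (D 0) ≤ entropy f (Λ 0) ∧
      ((∀ n, Set.InjOn (h n) (Λ n)) →
        (∀ γ ∈ 𝓤 X, SetRel.IsSymm γ → IsOpen γ → ∃ η ∈ 𝓤 Y, SetRel.IsSymm η ∧
          IsOpen η ∧ ∀ n, ∀ x ∈ Λ n, ∀ y ∈ Λ n, (h n x, h n y) ∈ η → (x, y) ∈ γ) →
        entropy g (D 0) = entropy f (Λ 0)) :=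
  entropy_equi_semiconjugacy_general f g Λ hΛinv D h hmaps hsurj hsemi hequi
end

section
/- Let X be a compact Hausdorff uniform space, f_{0,∞} a sequence of continuous self-maps of X, A = (a_{ij}) an N×N transition matrix, and V₁,…,V_N nonempty, closed, mutually disjoint subsets of X. Assume (i) f_n(V_i) ⊇ ⋃_{j : a_{ij}=1} V_j for all i and n (A-coupled-expansion), and (ii) f_{0,∞} is equi-continuous on ⋃ V_i. Then for each n there exist a nonempty compact set Λ_n ⊂ ⋃_{i=1}^N V_i with f_n(Λ_n) = Λ_{n+1} and a surjective map h_n : Λ_n → Σ_N^+(A) such that h_{n+1} ∘ f_n = σ_A ∘ h_n and {h_n} is equi-continuous; consequently h(f_{0,∞}, Λ_0) ≥ log λ(A), the log of the spectral radius of A. -/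
/-!
Disjointness of the `V i` makes the itinerary of a point of `Λ_n` well defined, and coupled
expansion realises every admissible sequence as an itinerary: the finite cylinders are nonempty
by induction, and compactness passes to the infinite ones. Equicontinuity on `⋃ V i`, together
with a uniform gap between the compact sets `V i`, makes agreement of the first `m` symbols
uniform in `n`. For the entropy bound, points realising the `∑ᵢⱼ (Aⁿ)ᵢⱼ` admissible words of
length `n + 1` form an `(n + 1, γ)`-separated set once `γ` separates the `V i`, and
`log λ(A) = lim (log ∑ᵢⱼ (Aⁿ)ᵢⱼ) / n` by Fekete's lemma.
-/

open Filter Set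
open scoped Uniformity

/-- The one-sided subshift of finite type `Σ_N^+(A)` determined by the transition
matrix `A`. -/
def SigmaA {N : ℕ} (A : Matrix (Fin N) (Fin N) ℕ) : Type :=
  {s : ℕ → Fin N // ∀ j : ℕ, A (s j) (s (j + 1)) = 1}

/-- The shift map `σ_A` on `Σ_N^+(A)`. -/
def shiftA {N : ℕ} {A : Matrix (Fin N) (Fin N) ℕ} (s : SigmaA A) : SigmaA A :=
  ⟨fun j => s.1 (j + 1), fun j => s.2 (j + 1)⟩

/-- The metric `ρ(α, β) = ∑_i d(α_i, β_i)/2^i` on `Σ_N^+(A)`. -/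
noncomputable def rho {N : ℕ} {A : Matrix (Fin N) (Fin N) ℕ} (α β : SigmaA A) : ℝ :=
  ∑' i : ℕ, if α.1 i = β.1 i then 0 else (1 / 2 : ℝ) ^ i

/-- The spectral radius `λ(A) = lim ‖Aⁿ‖^{1/n}` of the transition matrix `A`
(Gelfand formula, with `‖A‖` the sum of all entries). -/
noncomputable def lamA {N : ℕ} (A : Matrix (Fin N) (Fin N) ℕ) : ℝ :=
  Filter.atTop.limsup fun n : ℕ =>
    ((∑ i : Fin N, ∑ j : Fin N, (A ^ n) i j : ℕ) : ℝ) ^ ((n : ℝ)⁻¹)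

/-- `A` is a transition matrix: all entries are `0` or `1` and every row and every column
contains a `1`. -/
def IsTransition {N : ℕ} (A : Matrix (Fin N) (Fin N) ℕ) : Prop :=
  (∀ i j, A i j = 0 ∨ A i j = 1) ∧ (∀ i, ∃ j, A i j = 1) ∧ (∀ j, ∃ i, A i j = 1)

namespace SigmaA

variable {N : ℕ} {A : Matrix (Fin N) (Fin N) ℕ}

def cons (i : Fin N) (α : SigmaA A) (h : A i (α.1 0) = 1) : SigmaA A :=
  ⟨fun | 0 => i | k + 1 => α.1 k, fun | 0 => h | k + 1 => α.2 k⟩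

noncomputable def followSeq (hrow : ∀ i, ∃ j, A i j = 1) (i : Fin N) : ℕ → Fin N
  | 0 => i
  | k + 1 => (hrow (followSeq hrow i k)).choose

noncomputable def follow (hrow : ∀ i, ∃ j, A i j = 1) (i : Fin N) : SigmaA A :=
  ⟨followSeq hrow i, fun _ => (hrow _).choose_spec⟩

theorem nonempty [Nonempty (Fin N)] (hrow : ∀ i, ∃ j, A i j = 1) : Nonempty (SigmaA A) :=
  ⟨follow hrow (Classical.arbitrary _)⟩

theorem rho_le_of_forall_lt_eq {α β : SigmaA A} {m : ℕ}
    (h : ∀ k < m, α.1 k = β.1 k) : rho α β ≤ 2 * 2⁻¹ ^ m := by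
  have hle : ∀ i, (if α.1 i = β.1 i then 0 else (1 / 2 : ℝ) ^ i) ≤
      if m ≤ i then (2⁻¹ : ℝ) ^ i else 0 := fun i => by
    split_ifs with h₁ h₂ h₂
    · positivity
    · rfl
    · simp
    · exact absurd (h i (not_le.1 h₂)) h₁
  have hgeom : ∀ i, (if m ≤ i then (2⁻¹ : ℝ) ^ i else 0) ≤ (1 / 2) ^ i := fun i => by
    split_ifs <;> simp
  rw [← tsum_geometric_inv_two_ge m]
  refine Summable.tsum_le_tsum hle (summable_geometric_two.of_nonneg_of_le
    (fun i => by split_ifs <;> positivity) fun i => (hle i).trans (hgeom i))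
    (summable_geometric_two.of_nonneg_of_le (fun i => by split_ifs <;> positivity) hgeom)

end SigmaA

namespace CoupledExpansion

open Topology

section Words

open Finset Matrix

variable {N : ℕ} (A : Matrix (Fin N) (Fin N) ℕ)

def admissibleWords (n : ℕ) : Finset (Fin (n + 1) → Fin N) :=
  {w | ∀ k : Fin n, A (w k.castSucc) (w k.succ) = 1}

variable {A}

theorem mem_admissibleWords {n : ℕ} {w : Fin (n + 1) → Fin N} :
    w ∈ admissibleWords A n ↔ ∀ k : Fin n, A (w k.castSucc) (w k.succ) = 1 := by
  simp [admissibleWords]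

theorem exists_sigmaA_extending (hrow : ∀ i, ∃ j, A i j = 1) :
    ∀ {n} {w : Fin (n + 1) → Fin N}, w ∈ admissibleWords A n →
      ∃ α : SigmaA A, ∀ k : Fin (n + 1), α.1 k = w k
  | 0, w, _ => ⟨SigmaA.follow hrow (w 0), fun k => by rw [Fin.fin_one_eq_zero k]; rfl⟩
  | n + 1, w, hw => by
    rw [mem_admissibleWords] at hw
    obtain ⟨α, hα⟩ := exists_sigmaA_extending hrow (w := Fin.tail w)
      (mem_admissibleWords.2 fun k => hw k.succ)
    refine ⟨SigmaA.cons (w 0) α (by rw [show α.1 0 = w 1 from hα 0]; exact hw 0),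
      fun k => ?_⟩
    cases k using Fin.cases with
    | zero => rfl
    | succ k => exact hα k

theorem sum_pow_mulVec_eq_sum_words {ι R : Type*} [Fintype ι] [DecidableEq ι]
    [CommSemiring R] (M : Matrix ι ι R) (n : ℕ) (g : ι → R) :
    ∑ i, (M ^ n *ᵥ g) i = ∑ w : Fin (n + 1) → ι,
      (∏ k : Fin n, M (w k.castSucc) (w k.succ)) * g (w (Fin.last n)) := by
  induction n generalizing g with
  | zero => simpa using (Fintype.sum_equiv (Equiv.funUnique (Fin 1) ι) _ _ fun _ => rfl).symm
  | succ n ih =>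
    rw [pow_succ, ← mulVec_mulVec, ih,
      ← Equiv.sum_comp (Fin.snocEquiv fun _ : Fin (n + 2) => ι), Fintype.sum_prod_type_right]
    refine Fintype.sum_congr _ _ fun v => ?_
    simp [Fin.prod_univ_castSucc, mulVec, dotProduct, mul_sum, mul_assoc, ← Fin.castSucc_succ]

theorem card_admissibleWords (h01 : ∀ i j, A i j = 0 ∨ A i j = 1) (n : ℕ) :
    #(admissibleWords A n) = ∑ i, ∑ j, (A ^ n) i j := by
  have hprod : ∀ w : Fin (n + 1) → Fin N, ∏ k : Fin n, A (w k.castSucc) (w k.succ) =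
      if w ∈ admissibleWords A n then 1 else 0 := by
    intro w
    split_ifs with hw
    · exact prod_eq_one fun k _ => mem_admissibleWords.1 hw k
    · obtain ⟨k, hk⟩ := not_forall.1 (mt mem_admissibleWords.2 hw)
      exact prod_eq_zero (mem_univ k) ((h01 _ _).resolve_right hk)
  have := sum_pow_mulVec_eq_sum_words A n 1
  simp only [hprod, Pi.one_apply, mul_one] at this
  simpa [card_filter, mulVec, dotProduct] using this.symm

end Words

section Mass

open Finset Matrix

variable {N : ℕ} (A : Matrix (Fin N) (Fin N) ℕ)

def mass (n : ℕ) : ℕ := ∑ i, ∑ j, (A ^ n) i j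

variable {A}

theorem mass_add_le (m k : ℕ) : mass A (m + k) ≤ mass A m * mass A k := by
  have hcol : ∀ l, ∑ i, (A ^ m) i l ≤ mass A m := fun l =>
    (sum_le_sum fun _ _ => single_le_sum (fun _ _ => Nat.zero_le _) (mem_univ l))
  calc mass A (m + k) = ∑ l, (∑ i, (A ^ m) i l) * ∑ j, (A ^ k) l j := by
        simp only [mass, pow_add, mul_apply, sum_mul, mul_sum]
        exact (sum_congr rfl fun _ _ => sum_comm).trans
          (sum_comm.trans (sum_congr rfl fun _ _ => sum_comm))
    _ ≤ ∑ l, mass A m * ∑ j, (A ^ k) l j :=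
        sum_le_sum fun l _ => Nat.mul_le_mul_right _ (hcol l)
    _ = mass A m * mass A k := by rw [← mul_sum]; rfl

theorem exists_pow_apply_pos (hrow : ∀ i, ∃ j, A i j = 1) (n : ℕ) (i : Fin N) :
    ∃ j, 0 < (A ^ n) i j := by
  induction n with
  | zero => exact ⟨i, by simp⟩
  | succ n ih =>
    obtain ⟨k, hk⟩ := ih
    obtain ⟨j, hj⟩ := hrow k
    refine ⟨j, ?_⟩
    rw [pow_succ, mul_apply]
    exact lt_of_lt_of_le (by rw [hj, mul_one]; exact hk)
      (single_le_sum (f := fun l => (A ^ n) i l * A l j) (fun _ _ => Nat.zero_le _) (mem_univ k))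

theorem mass_pos [Nonempty (Fin N)] (hrow : ∀ i, ∃ j, A i j = 1) (n : ℕ) : 0 < mass A n := by
  obtain ⟨j, hj⟩ := exists_pow_apply_pos hrow n (Classical.arbitrary _)
  exact sum_pos' (fun _ _ => Nat.zero_le _)
    ⟨_, mem_univ _, sum_pos' (fun _ _ => Nat.zero_le _) ⟨j, mem_univ j, hj⟩⟩

theorem subadditive_log_mass [Nonempty (Fin N)] (hrow : ∀ i, ∃ j, A i j = 1) :
    Subadditive fun n => Real.log (mass A n) := fun m k => by
  have hpos : ∀ n, (0 : ℝ) < mass A n := fun n => by exact_mod_cast mass_pos hrow n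
  rw [← Real.log_mul (hpos m).ne' (hpos k).ne']
  exact Real.log_le_log (hpos _) (by exact_mod_cast mass_add_le m k)

theorem tendsto_log_mass_div [Nonempty (Fin N)] (hrow : ∀ i, ∃ j, A i j = 1) :
    Tendsto (fun n : ℕ => Real.log (mass A n) / n) atTop (𝓝 (Real.log (lamA A))) := by
  have hpos : ∀ n, (0 : ℝ) < mass A n := fun n => by exact_mod_cast mass_pos hrow n
  have hlim := (subadditive_log_mass hrow).tendsto_lim ⟨0, by
    rintro _ ⟨n, rfl⟩
    exact div_nonneg (Real.log_nonneg (by exact_mod_cast mass_pos hrow n)) n.cast_nonneg⟩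
  have hroot : Tendsto (fun n : ℕ => (mass A n : ℝ) ^ (n : ℝ)⁻¹) atTop
      (𝓝 (Real.exp (subadditive_log_mass hrow).lim)) := by
    refine ((Real.continuous_exp.tendsto _).comp hlim).congr fun n => ?_
    rw [Function.comp_apply, Real.rpow_def_of_pos (hpos n), div_eq_mul_inv]
  have hlam : lamA A = Real.exp (subadditive_log_mass hrow).lim := hroot.limsup_eq
  rwa [hlam, Real.log_exp]

end Mass

section Coding

variable {X : Type*} (f : ℕ → X → X) {N : ℕ} (A : Matrix (Fin N) (Fin N) ℕ)
  (V : Fin N → Set X)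

theorem itr_succ_apply (n : ℕ) :
    ∀ (k : ℕ) (x : X), itr f n (k + 1) x = itr f (n + 1) k (f n x)
  | 0, _ => rfl
  | k + 1, x => by
    change f _ (itr f n (k + 1) x) = f _ (itr f (n + 1) k (f n x))
    rw [itr_succ_apply n k x, Nat.add_right_comm]
    rfl

theorem continuous_itr [TopologicalSpace X] (hf : ∀ n, Continuous (f n)) (i : ℕ) :
    ∀ k, Continuous (itr f i k)
  | 0 => continuous_id
  | k + 1 => (hf (i + k)).comp (continuous_itr hf i k)

def transitionSet (m : ℕ) : Set X := ⋃ i, ⋃ j, ⋃ (_ : A i j = 1), V i ∩ f m ⁻¹' V j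

/-- The paper's `Λ_n = ⋃_{α ∈ Σ_N^+(A)} cylinder f V n α` (see
`exists_mem_cylinder_of_mem_codedSet`), written so that it is visibly closed. -/
def codedSet (n : ℕ) : Set X := ⋂ k, itr f n k ⁻¹' transitionSet f A V (n + k)

def cylinder (n : ℕ) (α : ℕ → Fin N) : Set X := ⋂ k, itr f n k ⁻¹' V (α k)

variable {f A V}

theorem isClosed_codedSet [TopologicalSpace X] (hf : ∀ n, Continuous (f n))
    (hVcl : ∀ i, IsClosed (V i)) (n : ℕ) : IsClosed (codedSet f A V n) :=
  isClosed_iInter fun k => IsClosed.preimage (continuous_itr f hf n k) <|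
    isClosed_iUnion_of_finite fun i => isClosed_iUnion_of_finite fun j =>
      isClosed_iUnion_of_finite fun _ => (hVcl i).inter ((hVcl j).preimage (hf _))

theorem cylinder_subset_codedSet (n : ℕ) (α : SigmaA A) :
    cylinder f V n α.1 ⊆ codedSet f A V n := fun _ hx =>
  mem_iInter.2 fun k => mem_iUnion.2 ⟨α.1 k, mem_iUnion.2 ⟨α.1 (k + 1), mem_iUnion.2
    ⟨α.2 k, mem_iInter.1 hx k, mem_iInter.1 hx (k + 1)⟩⟩⟩

theorem eq_of_mem_cylinder (hVdisj : ∀ i j, i ≠ j → Disjoint (V i) (V j)) {n : ℕ}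
    {α β : ℕ → Fin N} {x : X} (hα : x ∈ cylinder f V n α) (hβ : x ∈ cylinder f V n β) :
    α = β :=
  funext fun k => by_contra fun hne =>
    (hVdisj _ _ hne).notMem_of_mem_left (mem_iInter.1 hα k) (mem_iInter.1 hβ k)

theorem exists_mem_cylinder_of_mem_codedSet (hVdisj : ∀ i j, i ≠ j → Disjoint (V i) (V j))
    {n : ℕ} {x : X} (hx : x ∈ codedSet f A V n) :
    ∃ α : SigmaA A, x ∈ cylinder f V n α.1 := by
  have hstep : ∀ k,
      ∃ i, itr f n k x ∈ V i ∧ ∃ j, A i j = 1 ∧ itr f n (k + 1) x ∈ V j := by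
    intro k
    simpa [transitionSet, itr] using mem_iInter.1 hx k
  choose α hα β hαβ hβ using hstep
  have hnext : ∀ k, β k = α (k + 1) := fun k => by
    by_contra hne
    exact (hVdisj _ _ hne).notMem_of_mem_left (hβ k) (hα (k + 1))
  exact ⟨⟨α, fun k => hnext k ▸ hαβ k⟩, mem_iInter.2 hα⟩

theorem map_mem_cylinder {n : ℕ} {α : ℕ → Fin N} {x : X} (hx : x ∈ cylinder f V n α) :
    f n x ∈ cylinder f V (n + 1) fun k => α (k + 1) :=
  mem_iInter.2 fun k => by
    simpa only [mem_preimage, ← itr_succ_apply] using mem_iInter.1 hx (k + 1)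

theorem mem_cylinder_cons {n : ℕ} {i : Fin N} {β : SigmaA A} (h : A i (β.1 0) = 1) {x : X}
    (hx : x ∈ V i) (hfx : f n x ∈ cylinder f V (n + 1) β.1) :
    x ∈ cylinder f V n (SigmaA.cons i β h).1 :=
  mem_iInter.2 fun
    | 0 => hx
    | k + 1 => by
      rw [mem_preimage, itr_succ_apply]
      exact mem_iInter.1 hfx k

theorem codedSet_subset_iUnion (n : ℕ) : codedSet f A V n ⊆ ⋃ i, V i := fun x hx => by
  have h0 : x ∈ transitionSet f A V (n + 0) := mem_iInter.1 hx 0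
  simp only [transitionSet, mem_iUnion] at h0
  obtain ⟨i, -, -, hi, -⟩ := h0
  exact mem_iUnion.2 ⟨i, hi⟩

theorem exists_itr_mem_of_le (hVne : ∀ i, (V i).Nonempty)
    (hexp : ∀ n i, (⋃ j ∈ {j | A i j = 1}, V j) ⊆ f n '' V i) (m : ℕ) :
    ∀ (n : ℕ) (α : SigmaA A), ∃ x, ∀ k ≤ m, itr f n k x ∈ V (α.1 k) := by
  induction m with
  | zero => exact fun n α => ⟨(hVne _).some, fun k hk => by
      rw [Nat.le_zero.1 hk]; exact (hVne _).some_mem⟩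
  | succ m ih =>
    intro n α
    obtain ⟨y, hy⟩ := ih (n + 1) (shiftA α)
    obtain ⟨x, hx, rfl⟩ := hexp n (α.1 0) (mem_biUnion (α.2 0) (hy 0 m.zero_le))
    refine ⟨x, fun | 0, _ => hx | k + 1, hk => ?_⟩
    rw [itr_succ_apply]
    exact hy k (Nat.le_of_succ_le_succ hk)

theorem cylinder_nonempty [TopologicalSpace X] [CompactSpace X] (hf : ∀ n, Continuous (f n))
    (hVne : ∀ i, (V i).Nonempty) (hVcl : ∀ i, IsClosed (V i))
    (hexp : ∀ n i, (⋃ j ∈ {j | A i j = 1}, V j) ⊆ f n '' V i) (n : ℕ) (α : SigmaA A) :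
    (cylinder f V n α.1).Nonempty := by
  let K : ℕ → Set X := fun m => ⋂ k ≤ m, itr f n k ⁻¹' V (α.1 k)
  have hKcl : ∀ m, IsClosed (K m) := fun m =>
    isClosed_biInter fun k _ => (hVcl _).preimage (continuous_itr f hf n k)
  have hKne : ∀ m, (K m).Nonempty := fun m => by
    obtain ⟨x, hx⟩ := exists_itr_mem_of_le hVne hexp m n α
    exact ⟨x, mem_iInter₂.2 hx⟩
  obtain ⟨x, hx⟩ := IsCompact.nonempty_iInter_of_sequence_nonempty_isCompact_isClosed K
    (fun m => biInter_subset_biInter_left fun _ hk => Nat.le_succ_of_le hk) hKne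
    (hKcl 0).isCompact hKcl
  exact ⟨x, mem_iInter.2 fun k => mem_iInter₂.1 (mem_iInter.1 hx k) k le_rfl⟩

variable (f A V) in
/-- The coding map `h_n`, extended by an arbitrary value off `codedSet f A V n`. -/
noncomputable def coding [Nonempty (SigmaA A)] (n : ℕ) (x : X) : SigmaA A :=
  Classical.epsilon fun α : SigmaA A => x ∈ cylinder f V n α.1

section

variable [Nonempty (SigmaA A)]

theorem coding_eq (hVdisj : ∀ i j, i ≠ j → Disjoint (V i) (V j))
    {n : ℕ} {α : SigmaA A} {x : X} (hx : x ∈ cylinder f V n α.1) :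
    coding f A V n x = α :=
  Subtype.ext <| eq_of_mem_cylinder hVdisj
    (Classical.epsilon_spec (p := fun β : SigmaA A => x ∈ cylinder f V n β.1) ⟨α, hx⟩) hx

theorem mem_cylinder_coding (hVdisj : ∀ i j, i ≠ j → Disjoint (V i) (V j))
    {n : ℕ} {x : X} (hx : x ∈ codedSet f A V n) :
    x ∈ cylinder f V n (coding f A V n x).1 :=
  Classical.epsilon_spec (exists_mem_cylinder_of_mem_codedSet hVdisj hx)

theorem coding_map (hVdisj : ∀ i j, i ≠ j → Disjoint (V i) (V j))
    {n : ℕ} {x : X} (hx : x ∈ codedSet f A V n) :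
    coding f A V (n + 1) (f n x) = shiftA (coding f A V n x) :=
  coding_eq hVdisj (map_mem_cylinder (mem_cylinder_coding hVdisj hx))

theorem image_codedSet (hVdisj : ∀ i j, i ≠ j → Disjoint (V i) (V j))
    (hcol : ∀ j, ∃ i, A i j = 1)
    (hexp : ∀ n i, (⋃ j ∈ {j | A i j = 1}, V j) ⊆ f n '' V i) (n : ℕ) :
    f n '' codedSet f A V n = codedSet f A V (n + 1) := by
  refine Subset.antisymm ?_ fun y hy => ?_
  · rintro _ ⟨x, hx, rfl⟩
    exact cylinder_subset_codedSet (n + 1) (shiftA (coding f A V n x))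
      (map_mem_cylinder (mem_cylinder_coding hVdisj hx))
  · set β := coding f A V (n + 1) y
    have hyβ := mem_cylinder_coding hVdisj hy
    obtain ⟨i, hi⟩ := hcol (β.1 0)
    obtain ⟨x, hx, rfl⟩ := hexp n i (mem_biUnion hi (mem_iInter.1 hyβ 0))
    exact ⟨x, cylinder_subset_codedSet n _ (mem_cylinder_cons hi hx hyβ), rfl⟩

theorem surjOn_coding [TopologicalSpace X] [CompactSpace X] (hf : ∀ n, Continuous (f n))
    (hVne : ∀ i, (V i).Nonempty) (hVcl : ∀ i, IsClosed (V i))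
    (hVdisj : ∀ i j, i ≠ j → Disjoint (V i) (V j))
    (hexp : ∀ n i, (⋃ j ∈ {j | A i j = 1}, V j) ⊆ f n '' V i) (n : ℕ) :
    SurjOn (coding f A V n) (codedSet f A V n) univ := fun α _ =>
  let ⟨x, hx⟩ := cylinder_nonempty hf hVne hVcl hexp n α
  ⟨x, cylinder_subset_codedSet n α hx, coding_eq hVdisj hx⟩

end

end Coding

theorem exists_mem_uniformity_forall_notMem {X ι : Type*} [UniformSpace X] [CompactSpace X]
    [Finite ι] {V : ι → Set X} (hVcl : ∀ i, IsClosed (V i))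
    (hVdisj : ∀ i j, i ≠ j → Disjoint (V i) (V j)) :
    ∃ γ ∈ 𝓤 X, ∀ i j, i ≠ j → ∀ x ∈ V i, ∀ y ∈ V j, (x, y) ∉ γ := by
  refine ⟨(⋃ i, ⋃ j, ⋃ (_ : i ≠ j), V i ×ˢ V j)ᶜ, ?_, fun i j hij x hx y hy hxy =>
    hxy (mem_iUnion₂.2 ⟨i, j, mem_iUnion.2 ⟨hij, hx, hy⟩⟩)⟩
  have hcl : IsClosed (⋃ i, ⋃ j, ⋃ (_ : i ≠ j), V i ×ˢ V j) :=
    isClosed_iUnion_of_finite fun i => isClosed_iUnion_of_finite fun j =>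
      isClosed_iUnion_of_finite fun _ => (hVcl i).prod (hVcl j)
  rw [← nhdsSet_diagonal_eq_uniformity, hcl.isOpen_compl.mem_nhdsSet]
  rintro ⟨x, y⟩ (rfl : x = y) hx
  obtain ⟨i, j, hx⟩ := mem_iUnion₂.1 hx
  obtain ⟨hij, hxi, hxj⟩ := mem_iUnion.1 hx
  exact (hVdisj i j hij).notMem_of_mem_left hxi hxj

section UniformSpace

variable {X : Type*} [UniformSpace X] {f : ℕ → X → X}

theorem exists_mem_uniformity_rho_coding_lt [CompactSpace X] {N : ℕ}
    {A : Matrix (Fin N) (Fin N) ℕ} [Nonempty (SigmaA A)] {V : Fin N → Set X}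
    (hVcl : ∀ i, IsClosed (V i))
    (hVdisj : ∀ i j, i ≠ j → Disjoint (V i) (V j))
    (hequi : ∀ γ ∈ 𝓤 X, ∀ m : ℕ, ∃ η ∈ 𝓤 X,
      ∀ x ∈ ⋃ i, V i, ∀ y ∈ ⋃ i, V i, (x, y) ∈ η →
        ∀ i : ℕ, ∀ k < m, (itr f i k x, itr f i k y) ∈ γ)
    {ε : ℝ} (hε : 0 < ε) :
    ∃ η ∈ 𝓤 X, ∀ n, ∀ x ∈ codedSet f A V n, ∀ y ∈ codedSet f A V n, (x, y) ∈ η →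
      rho (coding f A V n x) (coding f A V n y) < ε := by
  obtain ⟨γ, hγ, hsep⟩ := exists_mem_uniformity_forall_notMem hVcl hVdisj
  obtain ⟨m, hm⟩ := exists_pow_lt_of_lt_one (half_pos hε) (by norm_num : (2⁻¹ : ℝ) < 1)
  obtain ⟨η, hη, hηγ⟩ := hequi γ hγ m
  refine ⟨η, hη, fun n x hx y hy hxy => ?_⟩
  refine (SigmaA.rho_le_of_forall_lt_eq (m := m) fun k hk => by_contra fun hne => ?_).trans_lt
    (by linarith)
  exact hsep _ _ hne _ (mem_iInter.1 (mem_cylinder_coding hVdisj hx) k) _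
    (mem_iInter.1 (mem_cylinder_coding hVdisj hy) k)
    (hηγ x (codedSet_subset_iUnion n hx) y (codedSet_subset_iUnion n hy) hxy n k hk)

variable (f) in
theorem bddAbove_card_isSep [CompactSpace X] {γ : Set (X × X)} (hγ : γ ∈ 𝓤 X) (Λ : Set X)
    (n : ℕ) :
    BddAbove {m | ∃ E : Finset X, ↑E ⊆ Λ ∧ IsSep f n γ ↑E ∧ E.card = m} := by
  obtain ⟨η, hη, _, hηγ⟩ := comp_symm_mem_uniformity_sets hγ
  obtain ⟨t, htfin, hcov⟩ := isCompact_univ.totallyBounded η hη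
  have : Finite t := htfin
  have hnear : ∀ x : X, ∃ c : t, (x, c.1) ∈ η := fun x => by
    obtain ⟨c, hc, hxc⟩ := mem_iUnion₂.1 (hcov (mem_univ x))
    exact ⟨⟨c, hc⟩, hxc⟩
  choose c hc using hnear
  refine ⟨Nat.card t ^ n, ?_⟩
  rintro _ ⟨E, -, hE, rfl⟩
  -- since `η ○ η ⊆ γ`, two points whose orbits pass near the same centres are not separated
  have hinj : Function.Injective fun (x : E) (j : Fin n) => c (itr f 0 j x) := by
    intro x y hxy
    by_contra hne
    obtain ⟨j, hj, hnot⟩ := hE x x.2 y y.2 (Subtype.coe_ne_coe.2 hne)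
    have hcj : c (itr f 0 j x) = c (itr f 0 j y) := congrFun hxy ⟨j, hj⟩
    exact hnot (hηγ ⟨_, hc _, hcj ▸ SetRel.symm η (hc (itr f 0 j y))⟩)
  calc E.card = Nat.card E := (Nat.card_eq_finsetCard E).symm
    _ ≤ Nat.card (Fin n → t) := Nat.card_le_card_of_injective _ hinj
    _ = Nat.card t ^ n := by rw [Nat.card_fun, Nat.card_fin]

theorem card_le_sepCard [CompactSpace X] {γ : Set (X × X)} (hγ : γ ∈ 𝓤 X) {Λ : Set X} {n : ℕ}
    {E : Finset X} (hE : ↑E ⊆ Λ) (hsep : IsSep f n γ ↑E) : E.card ≤ sepCard f Λ n γ :=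
  le_csSup (bddAbove_card_isSep f hγ Λ n) ⟨E, hE, hsep, rfl⟩

theorem le_entropy_of_tendsto {γ : Set (X × X)} (hγ : γ ∈ 𝓤 X) {Λ : Set X} {a : ℕ → ℝ}
    {ℓ : ℝ} (ha : Tendsto a atTop (𝓝 ℓ))
    (hle : ∀ᶠ n in atTop, a n ≤ Real.log (sepCard f Λ n γ) / n) :
    (ℓ : EReal) ≤ entropy f Λ :=
  calc (ℓ : EReal) = atTop.limsup fun n => (a n : EReal) :=
        ((EReal.tendsto_coe.2 ha).limsup_eq).symm
    _ ≤ atTop.limsup fun n : ℕ => ((Real.log (sepCard f Λ n γ) / n : ℝ) : EReal) :=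
        limsup_le_limsup (hle.mono fun _ h => EReal.coe_le_coe_iff.2 h)
    _ ≤ entropy f Λ := le_iSup₂_of_le γ hγ le_rfl

end UniformSpace

section Entropy

open Finset

variable {X : Type*} [UniformSpace X] [CompactSpace X] {f : ℕ → X → X} {N : ℕ}
  {A : Matrix (Fin N) (Fin N) ℕ} {V : Fin N → Set X}

theorem card_admissibleWords_le_sepCard (hf : ∀ n, Continuous (f n))
    (hVne : ∀ i, (V i).Nonempty) (hVcl : ∀ i, IsClosed (V i))
    (hVdisj : ∀ i j, i ≠ j → Disjoint (V i) (V j)) (hrow : ∀ i, ∃ j, A i j = 1)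
    (hexp : ∀ n i, (⋃ j ∈ {j | A i j = 1}, V j) ⊆ f n '' V i) {γ : Set (X × X)}
    (hγ : γ ∈ 𝓤 X) (hsep : ∀ i j, i ≠ j → ∀ x ∈ V i, ∀ y ∈ V j, (x, y) ∉ γ) (n : ℕ) :
    #(admissibleWords A n) ≤ sepCard f (codedSet f A V 0) (n + 1) γ := by
  have hpt : ∀ w ∈ admissibleWords A n,
      ∃ x ∈ codedSet f A V 0, ∀ k : Fin (n + 1), itr f 0 k x ∈ V (w k) := by
    intro w hw
    obtain ⟨α, hα⟩ := exists_sigmaA_extending hrow hw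
    obtain ⟨x, hx⟩ := cylinder_nonempty hf hVne hVcl hexp 0 α
    exact ⟨x, cylinder_subset_codedSet 0 α hx, fun k => hα k ▸ Set.mem_iInter.1 hx k⟩
  choose x hxΛ hxV using fun w : admissibleWords A n => hpt w.1 w.2
  have hinj : Function.Injective x := fun w w' hww' => Subtype.ext <| funext fun k =>
    by_contra fun hne => (hVdisj _ _ hne).notMem_of_mem_left (hxV w k) (hww' ▸ hxV w' k)
  rw [← card_attach, ← card_map ⟨x, hinj⟩]
  refine card_le_sepCard hγ ?_ ?_ <;>
    simp only [coe_map, coe_attach, Set.image_univ, Function.Embedding.coeFn_mk]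
  · exact Set.range_subset_iff.2 hxΛ
  rintro _ ⟨w, rfl⟩ _ ⟨w', rfl⟩ hne
  obtain ⟨k, hk⟩ := Function.ne_iff.1 fun h : w.1 = w'.1 => hne (Subtype.ext h ▸ rfl)
  exact ⟨k, k.isLt, hsep _ _ hk _ (hxV w k) _ (hxV w' k)⟩

theorem log_lamA_le_entropy [Nonempty (Fin N)] (hf : ∀ n, Continuous (f n))
    (hVne : ∀ i, (V i).Nonempty) (hVcl : ∀ i, IsClosed (V i))
    (hVdisj : ∀ i j, i ≠ j → Disjoint (V i) (V j)) (h01 : ∀ i j, A i j = 0 ∨ A i j = 1)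
    (hrow : ∀ i, ∃ j, A i j = 1) (hexp : ∀ n i, (⋃ j ∈ {j | A i j = 1}, V j) ⊆ f n '' V i) :
    (Real.log (lamA A) : EReal) ≤ entropy f (codedSet f A V 0) := by
  obtain ⟨γ, hγ, hsep⟩ := exists_mem_uniformity_forall_notMem hVcl hVdisj
  -- words of length `m + 1` give `(m + 1)`-separated sets of size `mass A m`; the index shift
  -- costs at most `log (mass A 1)`, by submultiplicativity
  refine le_entropy_of_tendsto hγ
    (a := fun n => (Real.log (mass A n) - Real.log (mass A 1)) / n) ?_ ?_
  · simpa [sub_div] using (tendsto_log_mass_div hrow).sub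
      (tendsto_const_div_atTop_nhds_zero_nat (Real.log (mass A 1)))
  · filter_upwards [eventually_ge_atTop 1] with n hn
    obtain ⟨m, rfl⟩ := Nat.exists_eq_add_of_le' hn
    have hsepCard : (mass A m : ℝ) ≤ sepCard f (codedSet f A V 0) (m + 1) γ := by
      rw [mass, ← card_admissibleWords h01]
      exact_mod_cast card_admissibleWords_le_sepCard hf hVne hVcl hVdisj hrow hexp hγ hsep m
    gcongr
    calc Real.log (mass A (m + 1)) - Real.log (mass A 1) ≤ Real.log (mass A m) :=
          sub_le_iff_le_add.2 (subadditive_log_mass hrow m 1)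
      _ ≤ Real.log (sepCard f (codedSet f A V 0) (m + 1) γ) :=
          Real.log_le_log (by exact_mod_cast mass_pos hrow m) hsepCard

end Entropy

end CoupledExpansion

open CoupledExpansion in
theorem coupled_expanding_lower_bound_general {X : Type*} [UniformSpace X] [CompactSpace X]
    (f : ℕ → X → X) (hf : ∀ n, Continuous (f n))
    (N : ℕ) (hN : 2 ≤ N) (A : Matrix (Fin N) (Fin N) ℕ) (hA : IsTransition A)
    (V : Fin N → Set X) (hVne : ∀ i, (V i).Nonempty) (hVcl : ∀ i, IsClosed (V i))
    (hVdisj : ∀ i j, i ≠ j → Disjoint (V i) (V j))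
    (hexp : ∀ n : ℕ, ∀ i : Fin N, (⋃ j ∈ {j | A i j = 1}, V j) ⊆ f n '' V i)
    (hequi : ∀ γ ∈ 𝓤 X, ∀ m : ℕ, ∃ η ∈ 𝓤 X,
      ∀ x ∈ ⋃ i, V i, ∀ y ∈ ⋃ i, V i, (x, y) ∈ η →
        ∀ i : ℕ, ∀ k < m, (itr f i k x, itr f i k y) ∈ γ) :
    ∃ Λ : ℕ → Set X, ∃ h : ℕ → X → SigmaA A,
      (∀ n, (Λ n).Nonempty) ∧ (∀ n, IsCompact (Λ n)) ∧ (∀ n, Λ n ⊆ ⋃ i, V i) ∧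
      (∀ n, f n '' Λ n = Λ (n + 1)) ∧
      (∀ n, Set.SurjOn (h n) (Λ n) Set.univ) ∧
      (∀ n, ∀ x ∈ Λ n, h (n + 1) (f n x) = shiftA (h n x)) ∧
      (∀ ε : ℝ, 0 < ε → ∃ η ∈ 𝓤 X,
        ∀ n, ∀ x ∈ Λ n, ∀ y ∈ Λ n, (x, y) ∈ η → rho (h n x) (h n y) < ε) ∧
      ((Real.log (lamA A) : EReal) ≤ entropy f (Λ 0)) := by
  obtain ⟨h01, hrow, hcol⟩ := hA
  have : Nonempty (Fin N) := ⟨⟨0, by omega⟩⟩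
  have : Nonempty (SigmaA A) := SigmaA.nonempty hrow
  have hsurj := surjOn_coding hf hVne hVcl hVdisj hexp
  exact ⟨codedSet f A V, coding f A V,
    fun n => (hsurj n (Set.mem_univ (Classical.arbitrary _))).imp fun _ => And.left,
    fun n => (isClosed_codedSet hf hVcl n).isCompact, codedSet_subset_iUnion,
    image_codedSet hVdisj hcol hexp, hsurj, fun _ _ => coding_map hVdisj,
    fun _ => exists_mem_uniformity_rho_coding_lt hVcl hVdisj hequi,
    log_lamA_le_entropy hf hVne hVcl hVdisj h01 hrow hexp⟩

/-- For a strictly `A`-coupled-expanding system (with the `V_i` closed and mutually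
disjoint) that is equi-continuous on `⋃ V_i`, there are compact sets `Λ_n ⊆ ⋃ V_i` with
`f_n(Λ_n) = Λ_{n+1}` and surjective maps `h_n : Λ_n → Σ_N^+(A)` forming an equi-continuous
semiconjugacy to the shift `σ_A`; consequently `h(f_{0,∞}, Λ_0) ≥ log λ(A)`. -/
theorem coupled_expanding_lower_bound {X : Type*} [UniformSpace X] [CompactSpace X]
    [T2Space X]
    (f : ℕ → X → X) (hf : ∀ n, Continuous (f n))
    (N : ℕ) (hN : 2 ≤ N) (A : Matrix (Fin N) (Fin N) ℕ) (hA : IsTransition A)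
    (V : Fin N → Set X) (hVne : ∀ i, (V i).Nonempty) (hVcl : ∀ i, IsClosed (V i))
    (hVdisj : ∀ i j, i ≠ j → Disjoint (V i) (V j))
    (hexp : ∀ n : ℕ, ∀ i : Fin N, (⋃ j ∈ {j | A i j = 1}, V j) ⊆ f n '' V i)
    (hequi : ∀ γ ∈ 𝓤 X, ∀ m : ℕ, ∃ η ∈ 𝓤 X,
      ∀ x ∈ ⋃ i, V i, ∀ y ∈ ⋃ i, V i, (x, y) ∈ η →
        ∀ i : ℕ, ∀ k < m, (itr f i k x, itr f i k y) ∈ γ) :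
    ∃ Λ : ℕ → Set X, ∃ h : ℕ → X → SigmaA A,
      (∀ n, (Λ n).Nonempty) ∧ (∀ n, IsCompact (Λ n)) ∧ (∀ n, Λ n ⊆ ⋃ i, V i) ∧
      (∀ n, f n '' Λ n = Λ (n + 1)) ∧
      (∀ n, Set.SurjOn (h n) (Λ n) Set.univ) ∧
      (∀ n, ∀ x ∈ Λ n, h (n + 1) (f n x) = shiftA (h n x)) ∧
      (∀ ε : ℝ, 0 < ε → ∃ η ∈ 𝓤 X,
        ∀ n, ∀ x ∈ Λ n, ∀ y ∈ Λ n, (x, y) ∈ η → rho (h n x) (h n y) < ε) ∧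
      ((Real.log (lamA A) : EReal) ≤ entropy f (Λ 0)) :=
  coupled_expanding_lower_bound_general f hf N hN A hA V hVne hVcl hVdisj hexp hequi
end
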